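/- arXiv:1908.06090 — 2 statements merged into one kernel-verified Lean document; each statement's English description precedes it below -/
import Mathlib

section
/- Let v ≥ 2, let f : {1,…,v} → ℝ^{v-1} be the effects coding, and let N = ((v-1)/2)(I − (1/v)J). Then for all i ≠ j, (f(i) − f(j))ᵀ N (f(i) − f(j)) = v − 1. -/
open Matrix

/-!
With `d = f i - f j` and `c = (v - 1) / 2`, the form is `c * (d ⬝ᵥ d - (∑ d)² / v)`.
If neither `i` nor `j` is the last level, `d = e_i - e_j` has `d ⬝ᵥ d = 2` and `∑ d = 0`.
If one of them is, `d = ±(𝟙 + e_k)` has `d ⬝ᵥ d = v + 2` and `∑ d = ±v`.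
Either way `d ⬝ᵥ d - (∑ d)² / v = 2`.
-/

theorem dotProduct_mulVec_smul_one_sub_smul_ones {ι R : Type*} [Fintype ι] [DecidableEq ι]
    [CommRing R] (c a : R) (d : ι → R) :
    d ⬝ᵥ ((c • (1 - a • of fun _ _ => (1 : R))) *ᵥ d) = c * (d ⬝ᵥ d - a * (∑ k, d k) ^ 2) := by
  have hJ : (of fun _ _ => (1 : R) : Matrix ι ι R) *ᵥ d = fun _ => ∑ k, d k := by
    ext; simp [mulVec, dotProduct]
  rw [smul_mulVec, sub_mulVec, one_mulVec, smul_mulVec, hJ, dotProduct_smul, dotProduct_sub,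
    dotProduct_smul]
  simp [dotProduct, ← Finset.sum_mul, sq]

section SingleVectors

variable {ι R : Type*} [Fintype ι] [DecidableEq ι]

theorem dotProduct_self_single_sub_single [Ring R] {p q : ι} (hpq : p ≠ q) :
    (Pi.single p 1 - Pi.single q 1 : ι → R) ⬝ᵥ (Pi.single p 1 - Pi.single q 1) = 2 := by
  norm_num [dotProduct_sub, hpq, hpq.symm]

theorem sum_single_sub_single [AddCommGroup R] [One R] (p q : ι) :
    ∑ k, (Pi.single p 1 - Pi.single q 1 : ι → R) k = 0 := by
  simp [Finset.sum_sub_distrib]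

theorem dotProduct_self_neg_one_sub_single [CommRing R] (q : ι) :
    (-1 - Pi.single q 1 : ι → R) ⬝ᵥ (-1 - Pi.single q 1) = Fintype.card ι + 3 := by
  rw [← neg_add', neg_dotProduct_neg]
  simp only [dotProduct_add, add_dotProduct, one_dotProduct_one, single_dotProduct,
    dotProduct_single, Pi.one_apply, Pi.add_apply, Pi.single_eq_same, mul_one]
  ring

theorem sum_neg_one_sub_single [Ring R] (q : ι) :
    ∑ k, (-1 - Pi.single q 1 : ι → R) k = -(Fintype.card ι + 1) := by
  simp only [Pi.sub_apply, Pi.neg_apply, Pi.one_apply, Finset.sum_sub_distrib,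
    Finset.sum_neg_distrib, Finset.sum_const, Finset.card_univ, nsmul_eq_mul, mul_one,
    Finset.sum_pi_single', Finset.mem_univ, if_true]
  abel

end SingleVectors

-- Level `v` of the paper is `⟨v - 1, _⟩ : Fin v`.
def effectsCoding (v : ℕ) (i : Fin v) : Fin (v - 1) → ℝ :=
  if h : (i : ℕ) = v - 1 then -1 else Pi.single ⟨i, by omega⟩ 1

theorem eq_effectsCoding {v : ℕ} {f : Fin v → Fin (v - 1) → ℝ}
    (hf : ∀ i j, f i j = if (i : ℕ) = v - 1 then -1 else if (i : ℕ) = (j : ℕ) then 1 else 0) :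
    f = effectsCoding v := by
  ext i k
  rw [hf, effectsCoding]
  split_ifs <;> simp_all [Fin.ext_iff, eq_comm]

theorem effectsCoding_sub_dotProduct_self_sub {v : ℕ} {i j : Fin v} (hij : i ≠ j) :
    (effectsCoding v i - effectsCoding v j) ⬝ᵥ (effectsCoding v i - effectsCoding v j)
      - 1 / v * (∑ k, (effectsCoding v i - effectsCoding v j) k) ^ 2 = 2 := by
  wlog hj : (j : ℕ) ≠ v - 1 generalizing i j
  · have hi : (i : ℕ) ≠ v - 1 := fun hi => hij (Fin.ext (by omega))
    rw [← neg_sub (effectsCoding v j), neg_dotProduct_neg]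
    simpa only [Pi.neg_apply, Finset.sum_neg_distrib, neg_sq] using this hij.symm hi
  by_cases hi : (i : ℕ) = v - 1
  · have hv : ((v - 1 : ℕ) : ℝ) = v - 1 := by rw [Nat.cast_pred i.pos]
    have hv0 : (v : ℝ) ≠ 0 := Nat.cast_ne_zero.mpr i.pos.ne'
    simp only [effectsCoding, dif_pos hi, dif_neg hj]
    rw [dotProduct_self_neg_one_sub_single, sum_neg_one_sub_single, Fintype.card_fin, hv]
    field_simp
    ring
  · simp only [effectsCoding, dif_neg hi, dif_neg hj]
    rw [dotProduct_self_single_sub_single (by simpa [Fin.ext_iff] using hij),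
      sum_single_sub_single]
    ring

theorem stmt5_general (v : ℕ)
    (f : Fin v → (Fin (v-1) → ℝ))
    (hf : ∀ i j, f i j = if (i:ℕ) = v - 1 then -1 else if (i:ℕ) = (j:ℕ) then 1 else 0)
    (N : Matrix (Fin (v-1)) (Fin (v-1)) ℝ)
    (hN : N = (((v:ℝ)-1)/2) •
        ((1 : Matrix (Fin (v-1)) (Fin (v-1)) ℝ) - ((1:ℝ)/(v:ℝ)) • Matrix.of (fun _ _ => (1:ℝ)))) :
    ∀ i j : Fin v, i ≠ j →
      (f i - f j) ⬝ᵥ (N *ᵥ (f i - f j)) = (v:ℝ) - 1 := by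
  intro i j hij
  rw [hN, dotProduct_mulVec_smul_one_sub_smul_ones, eq_effectsCoding hf,
    effectsCoding_sub_dotProduct_self_sub hij]
  ring

theorem stmt5 (v : ℕ) (hv : 2 ≤ v)
    (f : Fin v → (Fin (v-1) → ℝ))
    (hf : ∀ i j, f i j = if (i:ℕ) = v - 1 then -1 else if (i:ℕ) = (j:ℕ) then 1 else 0)
    (N : Matrix (Fin (v-1)) (Fin (v-1)) ℝ)
    (hN : N = (((v:ℝ)-1)/2) •
        ((1 : Matrix (Fin (v-1)) (Fin (v-1)) ℝ) - ((1:ℝ)/(v:ℝ)) • Matrix.of (fun _ _ => (1:ℝ)))) :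
    ∀ i j : Fin v, i ≠ j →
      (f i - f j) ⬝ᵥ (N *ᵥ (f i - f j)) = (v:ℝ) - 1 :=
  stmt5_general v f hf N hN
end

section
/- Let f : ℝ → ℝ be a polynomial of degree exactly 3 with positive leading coefficient, let p ∈ ℝ and S ∈ ℕ with S ≥ 3. Suppose f(d) ≤ p for every integer d with 1 ≤ d ≤ S, and suppose there are integers 1 ≤ d₁ < d₂ < d₃ ≤ S with f(d₁) = f(d₂) = f(d₃) = p. Then d₂ = d₁ + 1 and d₃ = S. -/
/-!
Since `f - p` is a cubic vanishing at `d₁ < d₂ < d₃`, `f x = p + a (x - d₁)(x - d₂)(x - d₃)` with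
`a > 0`. The cubic term is positive on `(d₁, d₂)` and on `(d₃, ∞)`, so the integer `d₁ + 1` cannot
lie strictly below `d₂`, and `d₃ + 1` cannot lie in `[1, S]`, without violating `f ≤ p` there.
-/

open Polynomial

theorem Polynomial.eq_C_add_C_leadingCoeff_mul_prod_X_sub_C {R : Type*} [CommRing R] [IsDomain R]
    {f : R[X]} {c : R} {s : Finset R} (hpos : 0 < f.natDegree) (hcard : s.card = f.natDegree)
    (hs : ∀ x ∈ s, f.eval x = c) :
    f = C c + C f.leadingCoeff * ∏ x ∈ s, (X - C x) := by
  set g := f - C c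
  have hdeg : g.natDegree = f.natDegree := natDegree_sub_C
  have hg0 : g ≠ 0 := ne_zero_of_natDegree_gt (hdeg ▸ hpos)
  have hlead : g.leadingCoeff = f.leadingCoeff :=
    leadingCoeff_sub_of_degree_lt ((degree_C_le).trans_lt (natDegree_pos_iff_degree_pos.mp hpos))
  have hroots : g.roots = s.val := by
    refine (Multiset.eq_of_le_of_card_le ?_ ?_).symm
    · refine (Multiset.le_iff_subset s.nodup).mpr fun x hx => ?_
      simp [mem_roots hg0, g, hs x hx]
    · rw [Finset.card_val, hcard, ← hdeg]
      exact card_roots' g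
  have hg := C_leadingCoeff_mul_prod_multiset_X_sub_C (p := g) (by rw [hroots, hdeg]; exact hcard)
  rw [hroots, hlead, ← Finset.prod_eq_multiset_prod] at hg
  rw [hg, add_sub_cancel]

theorem Polynomial.eval_eq_add_leadingCoeff_mul_of_natDegree_eq_three {K : Type*} [Field K]
    {f : K[X]} (hdeg : f.natDegree = 3) {c x₁ x₂ x₃ : K} (h₁₂ : x₁ ≠ x₂) (h₁₃ : x₁ ≠ x₃)
    (h₂₃ : x₂ ≠ x₃) (hf₁ : f.eval x₁ = c) (hf₂ : f.eval x₂ = c) (hf₃ : f.eval x₃ = c) (x : K) :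
    f.eval x = c + f.leadingCoeff * ((x - x₁) * (x - x₂) * (x - x₃)) := by
  classical
  have hcard : ({x₁, x₂, x₃} : Finset K).card = f.natDegree := by
    rw [Finset.card_insert_of_notMem (by simp [h₁₂, h₁₃]), Finset.card_pair h₂₃, hdeg]
  have hf := eq_C_add_C_leadingCoeff_mul_prod_X_sub_C (c := c) (by omega) hcard
    (by simp [hf₁, hf₂, hf₃])
  rw [congrArg (eval x) hf, Finset.prod_insert (by simp [h₁₂, h₁₃]), Finset.prod_pair h₂₃]
  simp only [eval_add, eval_C, eval_mul, eval_sub, eval_X]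
  ring

theorem stmt15_general (f : Polynomial ℝ) (hdeg : f.degree = 3) (hlead : 0 < f.leadingCoeff)
    (p : ℝ) (S : ℕ)
    (hle : ∀ d : ℤ, 1 ≤ d → d ≤ (S:ℤ) → f.eval (d:ℝ) ≤ p)
    (d₁ d₂ d₃ : ℤ) (h1 : 1 ≤ d₁) (h12 : d₁ < d₂) (h23 : d₂ < d₃) (h3S : d₃ ≤ (S:ℤ))
    (he1 : f.eval (d₁:ℝ) = p) (he2 : f.eval (d₂:ℝ) = p) (he3 : f.eval (d₃:ℝ) = p) :
    d₂ = d₁ + 1 ∧ d₃ = (S:ℤ) := by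
  have hd₁₂ : (d₁ : ℝ) < d₂ := by exact_mod_cast h12
  have hd₂₃ : (d₂ : ℝ) < d₃ := by exact_mod_cast h23
  have hf := eval_eq_add_leadingCoeff_mul_of_natDegree_eq_three
    (natDegree_eq_of_degree_eq_some hdeg) hd₁₂.ne (hd₁₂.trans hd₂₃).ne hd₂₃.ne he1 he2 he3
  have cubic_not_pos : ∀ d : ℤ, 1 ≤ d → d ≤ S → ¬ 0 < ((d : ℝ) - d₁) * (d - d₂) * (d - d₃) :=
    fun d hd₁ hdS hpos => by
      have := hle d hd₁ hdS
      rw [hf] at this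
      linarith [mul_pos hlead hpos]
  constructor
  · by_contra hne
    have hgap : (d₁ : ℝ) + 1 < d₂ := by exact_mod_cast (show d₁ + 1 < d₂ by omega)
    refine cubic_not_pos (d₁ + 1) (by omega) (by omega) ?_
    push_cast
    exact mul_pos_of_neg_of_neg (mul_neg_of_pos_of_neg (by linarith) (by linarith)) (by linarith)
  · by_contra hne
    refine cubic_not_pos (d₃ + 1) (by omega) (by omega) ?_
    push_cast
    exact mul_pos (mul_pos (by linarith) (by linarith)) (by linarith)

theorem stmt15 (f : Polynomial ℝ) (hdeg : f.degree = 3) (hlead : 0 < f.leadingCoeff)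
    (p : ℝ) (S : ℕ) (hS : 3 ≤ S)
    (hle : ∀ d : ℤ, 1 ≤ d → d ≤ (S:ℤ) → f.eval (d:ℝ) ≤ p)
    (d₁ d₂ d₃ : ℤ) (h1 : 1 ≤ d₁) (h12 : d₁ < d₂) (h23 : d₂ < d₃) (h3S : d₃ ≤ (S:ℤ))
    (he1 : f.eval (d₁:ℝ) = p) (he2 : f.eval (d₂:ℝ) = p) (he3 : f.eval (d₃:ℝ) = p) :
    d₂ = d₁ + 1 ∧ d₃ = (S:ℤ) :=
  stmt15_general f hdeg hlead p S hle d₁ d₂ d₃ h1 h12 h23 h3S he1 he2 he3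
end
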